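/- For every probability vector μ on 𝒳, the relative entropy is controlled by the total variation distance: d_KL(μ,π) ≤ ( (1/(1−p)) log(1/p) ) · d_TV(μ,π), where p = min_x π(x) (note p < 1 since |𝒳| ≥ 2). In particular, d_KL(t) ≤ ((1/(1−p)) log(1/p)) · d_TV(t) for all t ≥ 0. -/

import Mathlib

/-!
Coordinatewise, `x ↦ x log (x / b)` is convex and vanishes at `x = b`, so on `[b, 1]` it lies
below its chord: `a log (a / b) ≤ (a - b)⁺ · log (1 / b) / (1 - b)`. By concavity of `log`, the
slope `log (1 / b) / (1 - b)` decreases in `b`, so `b = π x` may be replaced by `p ≤ π x`. Summing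
over `x` and using `∑ (μ - π)⁺ = d_TV(μ, π)` gives the bound, which passes to the worst case over
starting points because the rows of the heat kernel are probability vectors.
-/

open scoped Classical

noncomputable section

/-- `n`-th power of a kernel `K` on a finite set. -/
def matPow {X : Type*} [Fintype X] [DecidableEq X] (K : X → X → ℝ) : ℕ → X → X → ℝ
  | 0 => fun x y => if x = y then 1 else 0
  | n + 1 => fun x y => ∑ z, matPow K n x z * K z y

/-- `K` is a stochastic matrix with entries in `[0,1]` and rows summing to `1`. -/
def IsStochastic {X : Type*} [Fintype X] (K : X → X → ℝ) : Prop :=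
  (∀ x y, 0 ≤ K x y ∧ K x y ≤ 1) ∧ ∀ x, ∑ y, K x y = 1

/-- Irreducibility: any state can be reached from any state. -/
def IsIrreducibleMatrix {X : Type*} [Fintype X] [DecidableEq X] (K : X → X → ℝ) : Prop :=
  ∀ x y, ∃ n : ℕ, 0 < matPow K n x y

/-- `π` is the (positive) stationary probability vector of `K`. -/
def IsStationaryVec {X : Type*} [Fintype X] (K : X → X → ℝ) (π : X → ℝ) : Prop :=
  (∀ x, 0 < π x) ∧ (∑ x, π x = 1) ∧ ∀ y, ∑ x, π x * K x y = π y

/-- A probability vector on a finite set. -/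
def IsProbVector {X : Type*} [Fintype X] (μ : X → ℝ) : Prop :=
  (∀ x, 0 ≤ μ x) ∧ ∑ x, μ x = 1

/-- Continuous-time heat kernel `P_t(x,y) = e^{-t} ∑ t^n/n! Kⁿ(x,y)`. -/
def heatKernel {X : Type*} [Fintype X] [DecidableEq X] (K : X → X → ℝ) (t : ℝ) (x y : X) : ℝ :=
  Real.exp (-t) * ∑' n : ℕ, t ^ n / (Nat.factorial n : ℝ) * matPow K n x y

/-- Total variation distance between two vectors. -/
def dTV {X : Type*} [Fintype X] (μ ν : X → ℝ) : ℝ := (∑ x, |μ x - ν x|) / 2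

/-- Relative entropy (Kullback–Leibler divergence). -/
def dKL {X : Type*} [Fintype X] (μ ν : X → ℝ) : ℝ := ∑ x, μ x * Real.log (μ x / ν x)

/-- Varentropy. -/
def varKL {X : Type*} [Fintype X] (μ ν : X → ℝ) : ℝ :=
  ∑ x, μ x * (Real.log (μ x / ν x) - dKL μ ν) ^ 2

/-- Worst-case total variation distance to equilibrium at time `t`. -/
def worstTV {X : Type*} [Fintype X] [DecidableEq X] (K : X → X → ℝ) (π : X → ℝ) (t : ℝ) : ℝ :=
  sSup {v : ℝ | ∃ o : X, v = dTV (heatKernel K t o) π}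

/-- Worst-case relative entropy to equilibrium at time `t`. -/
def worstKL {X : Type*} [Fintype X] [DecidableEq X] (K : X → X → ℝ) (π : X → ℝ) (t : ℝ) : ℝ :=
  sSup {v : ℝ | ∃ o : X, v = dKL (heatKernel K t o) π}

/-- Worst-case varentropy at time `t`. -/
def worstVar {X : Type*} [Fintype X] [DecidableEq X] (K : X → X → ℝ) (π : X → ℝ) (t : ℝ) : ℝ :=
  sSup {v : ℝ | ∃ o : X, v = varKL (heatKernel K t o) π}

/-- Mixing time: first time the worst-case TV distance drops below `ε`. -/
def mixingTime {X : Type*} [Fintype X] [DecidableEq X] (K : X → X → ℝ) (π : X → ℝ) (ε : ℝ) : ℝ :=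
  sInf {t : ℝ | 0 ≤ t ∧ worstTV K π t ≤ ε}

/-- Variance of `f` with respect to `π`. -/
def varPi {X : Type*} [Fintype X] (π f : X → ℝ) : ℝ :=
  ∑ x, π x * (f x - ∑ y, π y * f y) ^ 2

/-- Poincaré constant: the largest `γ` with `γ·Var_π(f) ≤ (1/2)∑ π(x)K(x,y)(f(x)-f(y))²`. -/
def poincare {X : Type*} [Fintype X] (K : X → X → ℝ) (π : X → ℝ) : ℝ :=
  sSup {γ : ℝ | ∀ f : X → ℝ, γ * varPi π f ≤ (∑ x, ∑ y, π x * K x y * (f x - f y) ^ 2) / 2}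

/-- Smallest non-zero entry of `K`. -/
def minEntry {X : Type*} [Fintype X] (K : X → X → ℝ) : ℝ :=
  sInf {v : ℝ | (∃ x y, v = K x y) ∧ 0 < v}

/-- Smallest stationary probability `p = min_x π(x)`. -/
def statMin {X : Type*} [Fintype X] (π : X → ℝ) : ℝ :=
  sInf {v : ℝ | ∃ x, v = π x}

/-- The support of `K` is symmetric. -/
def SymmSupport {X : Type*} (K : X → X → ℝ) : Prop :=
  ∀ x y, 0 < K x y → 0 < K y x

/-- Graph distance associated with the support of `K`. -/
def mdist {X : Type*} [Fintype X] [DecidableEq X] (K : X → X → ℝ) (x y : X) : ℕ :=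
  sInf {n : ℕ | 0 < matPow K n x y}

/-- Diameter of the state space for the distance `mdist`. -/
def mdiam {X : Type*} [Fintype X] [DecidableEq X] (K : X → X → ℝ) : ℕ :=
  Finset.sup Finset.univ fun p : X × X => mdist K p.1 p.2

/-- Lipschitz norm of `f` with respect to `mdist`. -/
def lipNorm {X : Type*} [Fintype X] [DecidableEq X] (K : X → X → ℝ) (f : X → ℝ) : ℝ :=
  sSup {v : ℝ | ∃ x y, x ≠ y ∧ v = |f x - f y| / (mdist K x y : ℝ)}

lemma setOf_exists_eq_eq_range {ι α : Type*} (f : ι → α) :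
    {v | ∃ i, v = f i} = Set.range f := by
  ext
  simp [eq_comm]

lemma mul_log_div_le_sub_mul {a b : ℝ} (hb : 0 < b) (hba : b ≤ a) (ha : a ≤ 1) :
    a * Real.log (a / b) ≤ (a - b) * (Real.log (1 / b) / (1 - b)) := by
  rcases hba.eq_or_lt with rfl | hba
  · simp [div_self hb.ne']
  have hconv : ConvexOn ℝ (Set.Ici 0) fun x => x * Real.log (x / b) := by
    refine (Real.convexOn_mul_log.sub
      ((LinearMap.mulRight ℝ (Real.log b)).concaveOn (convex_Ici 0))).congr fun x _ => ?_
    rcases eq_or_ne x 0 with rfl | hx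
    · simp
    · simp [Real.log_div hx hb.ne', mul_sub]
  have hsecant := hconv.secant_mono (a := b) hb.le (hb.le.trans hba.le)
    (Set.mem_Ici.2 zero_le_one) hba.ne' (hba.trans_le ha).ne' ha
  simp only [div_self hb.ne', Real.log_one, mul_zero, sub_zero, one_mul] at hsecant
  rwa [div_le_iff₀ (sub_pos.2 hba), mul_comm _ (a - b)] at hsecant

lemma log_one_div_div_one_sub_le {p b : ℝ} (hp : 0 < p) (hpb : p ≤ b) (hb : b < 1) :
    Real.log (1 / b) / (1 - b) ≤ Real.log (1 / p) / (1 - p) := by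
  have hsecant := (strictConcaveOn_log_Ioi.concaveOn.neg).secant_mono (a := 1)
    (Set.mem_Ioi.2 one_pos) (Set.mem_Ioi.2 hp) (Set.mem_Ioi.2 (hp.trans_le hpb))
    (hpb.trans_lt hb).ne hb.ne hpb
  have hneg (x : ℝ) : -Real.log x / (x - 1) = -(Real.log (1 / x) / (1 - x)) := by
    rw [one_div, Real.log_inv, ← neg_div_neg_eq, neg_sub, neg_div]
  simp only [Pi.neg_apply, Real.log_one, neg_zero, sub_zero, hneg] at hsecant
  exact neg_le_neg_iff.1 hsecant

lemma one_div_one_sub_mul_log_one_div_nonneg {p : ℝ} (hp : 0 < p) (hp1 : p < 1) :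
    0 ≤ 1 / (1 - p) * Real.log (1 / p) :=
  mul_nonneg (by simpa using hp1.le) (Real.log_nonneg (one_le_one_div hp hp1.le))

lemma mul_log_div_le_posPart_sub {p a b : ℝ} (hp : 0 < p) (hp1 : p < 1) (hpb : p ≤ b)
    (ha : 0 ≤ a) (ha1 : a ≤ 1) :
    a * Real.log (a / b) ≤ 1 / (1 - p) * Real.log (1 / p) * (a - b)⁺ := by
  have hb : 0 < b := hp.trans_le hpb
  have := one_div_one_sub_mul_log_one_div_nonneg hp hp1
  rcases le_or_gt a b with hab | hab
  · exact (mul_nonpos_of_nonneg_of_nonpos ha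
      (Real.log_nonpos (div_nonneg ha hb.le) ((div_le_one hb).2 hab))).trans (by positivity)
  calc a * Real.log (a / b) ≤ (a - b) * (Real.log (1 / b) / (1 - b)) :=
        mul_log_div_le_sub_mul hb hab.le ha1
    _ ≤ (a - b) * (Real.log (1 / p) / (1 - p)) :=
      mul_le_mul_of_nonneg_left (log_one_div_div_one_sub_le hp hpb (hab.trans_le ha1))
        (sub_nonneg.2 hab.le)
    _ = 1 / (1 - p) * Real.log (1 / p) * (a - b)⁺ := by
      rw [posPart_eq_self.2 (sub_nonneg.2 hab.le)]; ring

section Divergences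

variable {X : Type*} [Fintype X]

lemma IsProbVector.le_one {μ : X → ℝ} (hμ : IsProbVector μ) (x : X) : μ x ≤ 1 :=
  hμ.2 ▸ Finset.single_le_sum (fun y _ => hμ.1 y) (Finset.mem_univ x)

lemma dTV_eq_sum_posPart_sub {μ ν : X → ℝ} (h : ∑ x, μ x = ∑ x, ν x) :
    dTV μ ν = ∑ x, (μ x - ν x)⁺ := by
  have habs (d : ℝ) : |d| = 2 * d⁺ - d := by
    linarith [add_abs_eq_two_nsmul_posPart d, two_nsmul d⁺]
  simp only [dTV, habs, Finset.sum_sub_distrib, h, ← Finset.mul_sum]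
  ring

theorem dKL_le_mul_dTV {μ ν : X → ℝ} {p : ℝ} (hp : 0 < p) (hp1 : p < 1) (hpν : ∀ x, p ≤ ν x)
    (hν : ∑ x, ν x = 1) (hμ : IsProbVector μ) :
    dKL μ ν ≤ 1 / (1 - p) * Real.log (1 / p) * dTV μ ν := by
  rw [dTV_eq_sum_posPart_sub (hμ.2.trans hν.symm), Finset.mul_sum]
  exact Finset.sum_le_sum fun x _ =>
    mul_log_div_le_posPart_sub hp hp1 (hpν x) (hμ.1 x) (hμ.le_one x)

end Divergences

section StatMin

variable {X : Type*} [Fintype X]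

lemma statMin_eq_sInf_range (π : X → ℝ) : statMin π = sInf (Set.range π) := by
  rw [statMin, setOf_exists_eq_eq_range]

lemma statMin_le (π : X → ℝ) (x : X) : statMin π ≤ π x :=
  statMin_eq_sInf_range π ▸ csInf_le (Set.finite_range π).bddBelow (Set.mem_range_self x)

lemma exists_statMin_eq [Nonempty X] (π : X → ℝ) : ∃ x, statMin π = π x := by
  obtain ⟨x, hx⟩ := (Set.range_nonempty π).csInf_mem (Set.finite_range π)
  exact ⟨x, (statMin_eq_sInf_range π).trans hx.symm⟩

lemma statMin_pos [Nonempty X] {π : X → ℝ} (hπ : ∀ x, 0 < π x) : 0 < statMin π := by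
  obtain ⟨x, hx⟩ := exists_statMin_eq π
  exact hx ▸ hπ x

lemma statMin_lt_one (hcard : 2 ≤ Fintype.card X) {π : X → ℝ} (hπ : ∑ x, π x = 1) :
    statMin π < 1 := by
  have := Finset.card_nsmul_le_sum Finset.univ π (statMin π) fun x _ => statMin_le π x
  rw [hπ, Finset.card_univ, nsmul_eq_mul] at this
  have hcard' : (2 : ℝ) ≤ Fintype.card X := by exact_mod_cast hcard
  nlinarith

end StatMin

section HeatKernel

variable {X : Type*} [Fintype X] [DecidableEq X] {K : X → X → ℝ}

lemma matPow_nonneg (hK : IsStochastic K) (n : ℕ) (x y : X) : 0 ≤ matPow K n x y := by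
  induction n generalizing y with
  | zero => unfold matPow; split <;> norm_num
  | succ n ih => exact Finset.sum_nonneg fun z _ => mul_nonneg (ih z) (hK.1 z y).1

lemma sum_matPow (hK : IsStochastic K) (n : ℕ) (x : X) : ∑ y, matPow K n x y = 1 := by
  induction n with
  | zero => simp [matPow]
  | succ n ih =>
    simp only [matPow]
    rw [Finset.sum_comm]
    simpa only [← Finset.mul_sum, hK.2, mul_one] using ih

lemma matPow_le_one (hK : IsStochastic K) (n : ℕ) (x y : X) : matPow K n x y ≤ 1 :=
  sum_matPow hK n x ▸
    Finset.single_le_sum (fun z _ => matPow_nonneg hK n x z) (Finset.mem_univ y)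

lemma summable_heatKernel_series (hK : IsStochastic K) {t : ℝ} (ht : 0 ≤ t) (x y : X) :
    Summable fun n : ℕ => t ^ n / n.factorial * matPow K n x y :=
  (Real.summable_pow_div_factorial t).of_nonneg_of_le
    (fun n => mul_nonneg (by positivity) (matPow_nonneg hK n x y))
    (fun n => mul_le_of_le_one_right (by positivity) (matPow_le_one hK n x y))

theorem isProbVector_heatKernel (hK : IsStochastic K) {t : ℝ} (ht : 0 ≤ t) (x : X) :
    IsProbVector (heatKernel K t x) := by
  refine ⟨fun y => mul_nonneg (Real.exp_pos _).le
    (tsum_nonneg fun n => mul_nonneg (by positivity) (matPow_nonneg hK n x y)), ?_⟩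
  have hrow : HasSum (fun n : ℕ => t ^ n / n.factorial)
      (∑ y, ∑' n : ℕ, t ^ n / n.factorial * matPow K n x y) := by
    convert hasSum_sum fun y _ => (summable_heatKernel_series hK ht x y).hasSum with n
    rw [← Finset.mul_sum, sum_matPow hK, mul_one]
  simp only [heatKernel]
  rw [← Finset.mul_sum, hrow.unique (Real.exp_eq_exp_ℝ ▸ NormedSpace.expSeries_div_hasSum_exp t),
    ← Real.exp_add, neg_add_cancel, Real.exp_zero]

lemma dTV_heatKernel_le_worstTV (π : X → ℝ) (t : ℝ) (x : X) :
    dTV (heatKernel K t x) π ≤ worstTV K π t := by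
  rw [worstTV, setOf_exists_eq_eq_range]
  exact le_csSup (Set.finite_range _).bddAbove (Set.mem_range_self x)

lemma worstKL_le [Nonempty X] {π : X → ℝ} {t c : ℝ}
    (h : ∀ x, dKL (heatKernel K t x) π ≤ c) : worstKL K π t ≤ c := by
  rw [worstKL, setOf_exists_eq_eq_range]
  exact csSup_le (Set.range_nonempty _) (Set.forall_mem_range.2 h)

end HeatKernel

theorem stmt_11_general {X : Type*} [Fintype X] [DecidableEq X]
    (hcard : 2 ≤ Fintype.card X)
    (K : X → X → ℝ) (π : X → ℝ)
    (hK : IsStochastic K) (hπ : IsStationaryVec K π) :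
    (∀ μ : X → ℝ, IsProbVector μ →
      dKL μ π ≤ 1 / (1 - statMin π) * Real.log (1 / statMin π) * dTV μ π) ∧
    ∀ t : ℝ, 0 ≤ t →
      worstKL K π t ≤ 1 / (1 - statMin π) * Real.log (1 / statMin π) * worstTV K π t := by
  have : Nonempty X := Fintype.card_pos_iff.mp (by omega)
  have hp := statMin_pos hπ.1
  have hp1 := statMin_lt_one hcard hπ.2.1
  have hpinsker : ∀ μ, IsProbVector μ →
      dKL μ π ≤ 1 / (1 - statMin π) * Real.log (1 / statMin π) * dTV μ π :=
    fun μ hμ => dKL_le_mul_dTV hp hp1 (statMin_le π) hπ.2.1 hμ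
  refine ⟨hpinsker, fun t ht => worstKL_le fun x => ?_⟩
  exact (hpinsker _ (isProbVector_heatKernel hK ht x)).trans
    (mul_le_mul_of_nonneg_left (dTV_heatKernel_le_worstTV π t x)
      (one_div_one_sub_mul_log_one_div_nonneg hp hp1))

/-- Reversed Pinsker inequality. -/
theorem stmt_11 {X : Type*} [Fintype X] [DecidableEq X]
    (hcard : 2 ≤ Fintype.card X)
    (K : X → X → ℝ) (π : X → ℝ)
    (hK : IsStochastic K) (hirr : IsIrreducibleMatrix K) (hπ : IsStationaryVec K π) :
    (∀ μ : X → ℝ, IsProbVector μ →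
      dKL μ π ≤ 1 / (1 - statMin π) * Real.log (1 / statMin π) * dTV μ π) ∧
    ∀ t : ℝ, 0 ≤ t →
      worstKL K π t ≤ 1 / (1 - statMin π) * Real.log (1 / statMin π) * worstTV K π t :=
  stmt_11_general hcard K π hK hπ
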